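/- Let S = {0,1,…,9} and E = {{1,2},{1,6},{1,7},{1,8},{2,3},{2,6},{3,4},{4,5},{6,7},{7,8},{8,9}}, and let (S,𝒳₁,rk₁) and (S,𝒳₂,rk₂) be the two combinatorial complexes with 𝒳ᵢ = {{s} : s ∈ S} ∪ E ∪ {{1,2,6},{1,7,8,9}} ∪ {zᵢ}, where z₁ = {0,4,5,6,7,8,9}, z₂ = {0,4,6,7,8,9}, and rkᵢ assigns 0 to singletons, 1 to E, 2 to {1,2,6} and {1,7,8,9}, and 3 to zᵢ. Then for every k ∈ {0,1,2} the 1-adjacency relation on k-cells is the same in both complexes (for k = 2 it is empty in both, since no 3-cell of either complex strictly contains any 2-cell), and for every k ∈ {1,2,3} the 1-coadjacency relation on k-cells is the same in both complexes under the identification z₁ ↔ z₂ (for k = 3 it is empty in both). Hence the two distinct complexes also share all adjacency matrices {A_{k,1}} and coadjacency matrices {coA_{k,1}}. -/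
import Mathlib


/-- The edge set `E` of the running example. -/
def E10 : Finset (Finset (Fin 10)) :=
  {{1,2},{1,6},{1,7},{1,8},{2,3},{2,6},{3,4},{4,5},{6,7},{7,8},{8,9}}

/-- The 3-cell of the first complex. -/
def z1 : Finset (Fin 10) := {0,4,5,6,7,8,9}

/-- The 3-cell of the second complex. -/
def z2 : Finset (Fin 10) := {0,4,6,7,8,9}

/-- Cells of the first combinatorial complex. -/
def X1 : Finset (Finset (Fin 10)) :=
  (Finset.univ.image fun s : Fin 10 => ({s} : Finset (Fin 10))) ∪ E10 ∪
    {{1,2,6},{1,7,8,9}} ∪ {z1}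

/-- Cells of the second combinatorial complex. -/
def X2 : Finset (Finset (Fin 10)) :=
  (Finset.univ.image fun s : Fin 10 => ({s} : Finset (Fin 10))) ∪ E10 ∪
    {{1,2,6},{1,7,8,9}} ∪ {z2}

/-- The common rank function: 0 on singletons, 1 on edges, 2 on `{1,2,6}` and
`{1,7,8,9}`, and 3 on the remaining (top) cell. -/
def rk10 : Finset (Fin 10) → ℕ := fun x =>
  if x.card ≤ 1 then 0
  else if x ∈ E10 then 1
  else if x = ({1,2,6} : Finset (Fin 10)) ∨ x = ({1,7,8,9} : Finset (Fin 10)) then 2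
  else 3

/-- `x` and `y` are 1-adjacent `k`-cells of `X`: both are cells of rank `k` and some
cell of rank `k+1` strictly contains both. -/
def Adj1 (X : Finset (Finset (Fin 10))) (k : ℕ) (x y : Finset (Fin 10)) : Prop :=
  x ∈ X ∧ y ∈ X ∧ rk10 x = k ∧ rk10 y = k ∧
    ∃ z ∈ X, rk10 z = k + 1 ∧ x ⊂ z ∧ y ⊂ z

/-- `x` and `y` are 1-coadjacent `k`-cells of `X`: both are cells of rank `k` and some
cell of rank `k-1` is strictly contained in both. -/
def Coadj1 (X : Finset (Finset (Fin 10))) (k : ℕ) (x y : Finset (Fin 10)) : Prop :=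
  x ∈ X ∧ y ∈ X ∧ rk10 x = k ∧ rk10 y = k ∧
    ∃ z ∈ X, rk10 z = k - 1 ∧ z ⊂ x ∧ z ⊂ y

/-- The identification of the two top cells `z₁ ↔ z₂` (identity on all other cells). -/
def ι : Finset (Fin 10) → Finset (Fin 10) := fun x =>
  if x = z1 then z2 else if x = z2 then z1 else x

/-! ### Auxiliary lemmas -/

/-- The common part of the two complexes. -/
def C0 : Finset (Finset (Fin 10)) :=
  (Finset.univ.image fun s : Fin 10 => ({s} : Finset (Fin 10))) ∪ E10 ∪
    {{1,2,6},{1,7,8,9}}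

lemma rkz1 : rk10 z1 = 3 := by decide
lemma rkz2 : rk10 z2 = 3 := by decide
lemma z1_ne_z2 : z1 ≠ z2 := by decide

lemma rk2_cases {x : Finset (Fin 10)} (h : rk10 x = 2) :
    x = ({1,2,6} : Finset (Fin 10)) ∨ x = ({1,7,8,9} : Finset (Fin 10)) := by
  unfold rk10 at h
  split_ifs at h with h1 h2 h3
  all_goals first | exact h3 | omega

lemma no2sub {w : Finset (Fin 10)} (hw : w = z1 ∨ w = z2)
    {x : Finset (Fin 10)} (hx : rk10 x = 2) : ¬ x ⊂ w := by
  rcases rk2_cases hx with rfl | rfl <;> rcases hw with rfl | rfl <;> decide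

lemma memC_rk {z : Finset (Fin 10)} (hz : z ∈ C0) : rk10 z ≤ 2 := by
  rcases Finset.mem_union.1 hz with hz | hz
  · rcases Finset.mem_union.1 hz with hz | hz
    · obtain ⟨s, -, rfl⟩ := Finset.mem_image.1 hz
      simp [rk10]
    · fin_cases hz <;> decide
  · fin_cases hz <;> decide

lemma ι_z1 : ι z1 = z2 := if_pos rfl

lemma ι_z2 : ι z2 = z1 := by
  unfold ι
  rw [if_neg (Ne.symm z1_ne_z2), if_pos rfl]

lemma ι_eq_self {x : Finset (Fin 10)} (h1 : x ≠ z1) (h2 : x ≠ z2) : ι x = x := by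
  unfold ι
  rw [if_neg h1, if_neg h2]

lemma ι_ι (x : Finset (Fin 10)) : ι (ι x) = x := by
  by_cases h1 : x = z1
  · rw [h1, ι_z1, ι_z2]
  · by_cases h2 : x = z2
    · rw [h2, ι_z2, ι_z1]
    · rw [ι_eq_self h1 h2, ι_eq_self h1 h2]

lemma adj_key {w w' : Finset (Fin 10)} (hw : rk10 w = 3) (hwz : w = z1 ∨ w = z2)
    {k : ℕ} (hk : k ≤ 2) {x y : Finset (Fin 10)}
    (h : Adj1 (C0 ∪ {w}) k x y) : Adj1 (C0 ∪ {w'}) k x y := by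
  obtain ⟨hx, hy, hrx, hry, z, hz, hrz, hxz, hyz⟩ := h
  have hxC : x ∈ C0 := by
    rcases Finset.mem_union.1 hx with h' | h'
    · exact h'
    · exfalso
      rw [Finset.mem_singleton.1 h', hw] at hrx
      omega
  have hyC : y ∈ C0 := by
    rcases Finset.mem_union.1 hy with h' | h'
    · exact h'
    · exfalso
      rw [Finset.mem_singleton.1 h', hw] at hry
      omega
  have hzC : z ∈ C0 := by
    rcases Finset.mem_union.1 hz with h' | h'
    · exact h'
    · exfalso
      rw [Finset.mem_singleton.1 h'] at hxz hrz
      rw [hw] at hrz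
      have hk2 : k = 2 := by omega
      exact no2sub hwz (hk2 ▸ hrx) hxz
  exact ⟨Finset.mem_union_left _ hxC, Finset.mem_union_left _ hyC, hrx, hry,
    z, Finset.mem_union_left _ hzC, hrz, hxz, hyz⟩

lemma adj2_empty {w : Finset (Fin 10)} (hwz : w = z1 ∨ w = z2)
    {x y : Finset (Fin 10)} : ¬ Adj1 (C0 ∪ {w}) 2 x y := by
  rintro ⟨hx, hy, hrx, hry, z, hz, hrz, hxz, hyz⟩
  have hzw : z = w := by
    rcases Finset.mem_union.1 hz with h' | h'
    · have := memC_rk h'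
      omega
    · exact Finset.mem_singleton.1 h'
  subst hzw
  exact no2sub hwz hrx hxz

lemma coadj3_empty {w : Finset (Fin 10)} (hwz : w = z1 ∨ w = z2)
    {x y : Finset (Fin 10)} : ¬ Coadj1 (C0 ∪ {w}) 3 x y := by
  rintro ⟨hx, hy, hrx, hry, z, hz, hrz, hzx, hzy⟩
  have hxw : x = w := by
    rcases Finset.mem_union.1 hx with h' | h'
    · have := memC_rk h'
      omega
    · exact Finset.mem_singleton.1 h'
  subst hxw
  exact no2sub hwz hrz hzx

lemma coadj_key {w w' : Finset (Fin 10)} (hw : rk10 w = 3)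
    (hww : (w = z1 ∧ w' = z2) ∨ (w = z2 ∧ w' = z1))
    {k : ℕ} (hk1 : 1 ≤ k) (hk3 : k ≤ 3) {x y : Finset (Fin 10)}
    (h : Coadj1 (C0 ∪ {w}) k x y) : Coadj1 (C0 ∪ {w'}) k (ι x) (ι y) := by
  have hwor : w = z1 ∨ w = z2 := by
    rcases hww with ⟨h1, _⟩ | ⟨h1, _⟩
    · exact Or.inl h1
    · exact Or.inr h1
  by_cases hk : k = 3
  · subst hk
    exact absurd h (coadj3_empty hwor)
  · have hkle : k ≤ 2 := by omega
    obtain ⟨hx, hy, hrx, hry, z, hz, hrz, hzx, hzy⟩ := h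
    have hxC : x ∈ C0 := by
      rcases Finset.mem_union.1 hx with h' | h'
      · exact h'
      · exfalso
        rw [Finset.mem_singleton.1 h', hw] at hrx
        omega
    have hyC : y ∈ C0 := by
      rcases Finset.mem_union.1 hy with h' | h'
      · exact h'
      · exfalso
        rw [Finset.mem_singleton.1 h', hw] at hry
        omega
    have hzC : z ∈ C0 := by
      rcases Finset.mem_union.1 hz with h' | h'
      · exact h'
      · exfalso
        rw [Finset.mem_singleton.1 h', hw] at hrz
        omega
    have hιx : ι x = x := by
      refine ι_eq_self (fun hh => ?_) (fun hh => ?_)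
      · rw [hh, rkz1] at hrx; omega
      · rw [hh, rkz2] at hrx; omega
    have hιy : ι y = y := by
      refine ι_eq_self (fun hh => ?_) (fun hh => ?_)
      · rw [hh, rkz1] at hry; omega
      · rw [hh, rkz2] at hry; omega
    rw [hιx, hιy]
    exact ⟨Finset.mem_union_left _ hxC, Finset.mem_union_left _ hyC, hrx, hry,
      z, Finset.mem_union_left _ hzC, hrz, hzx, hzy⟩


/-- The two distinct complexes of the representation counterexample share all
1-adjacency relations on `k`-cells for `k ∈ {0,1,2}` (empty for `k = 2` in both) and
all 1-coadjacency relations on `k`-cells for `k ∈ {1,2,3}` under the identification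
`z₁ ↔ z₂` (empty for `k = 3` in both); hence they share all adjacency matrices
`{A_{k,1}}` and coadjacency matrices `{coA_{k,1}}`. -/

theorem distinct_CCs_with_same_adjacency_and_coadjacency :
    (∀ k : ℕ, k ≤ 2 → ∀ x y : Finset (Fin 10), Adj1 X1 k x y ↔ Adj1 X2 k x y) ∧
    (∀ x y : Finset (Fin 10), ¬ Adj1 X1 2 x y ∧ ¬ Adj1 X2 2 x y) ∧
    (∀ k : ℕ, 1 ≤ k → k ≤ 3 → ∀ x y : Finset (Fin 10),
      Coadj1 X1 k x y ↔ Coadj1 X2 k (ι x) (ι y)) ∧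
    (∀ x y : Finset (Fin 10), ¬ Coadj1 X1 3 x y ∧ ¬ Coadj1 X2 3 x y) := by
  
  have hX1 : X1 = C0 ∪ {z1} := rfl
  have hX2 : X2 = C0 ∪ {z2} := rfl
  refine ⟨?_, ?_, ?_, ?_⟩
  · intro k hk x y
    rw [hX1, hX2]
    exact ⟨adj_key rkz1 (Or.inl rfl) hk, adj_key rkz2 (Or.inr rfl) hk⟩
  · intro x y
    rw [hX1, hX2]
    exact ⟨adj2_empty (Or.inl rfl), adj2_empty (Or.inr rfl)⟩
  · intro k hk1 hk3 x y
    rw [hX1, hX2]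
    constructor
    · exact coadj_key rkz1 (Or.inl ⟨rfl, rfl⟩) hk1 hk3
    · intro h
      have := coadj_key rkz2 (Or.inr ⟨rfl, rfl⟩) hk1 hk3 h
      rwa [ι_ι, ι_ι] at this
  · intro x y
    rw [hX1, hX2]
    exact ⟨coadj3_empty (Or.inl rfl), coadj3_empty (Or.inr rfl)⟩
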